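/- arXiv:1908.09078 — 2 statements merged into one kernel-verified Lean document; each statement's English description precedes it below -/
import Mathlib

section
/- Let f : ℝ^{m×n} → ℝ be any function, let ν > 0, let κ be a positive integer, let 𝒳* denote the set of global minimizers of X ↦ ν f(X) + rank(X) over ℝ^{m×n}, and let Ω_κ = {X ∈ ℝ^{m×n} : rank(X) ≤ κ}. Suppose 𝒳* ∩ Ω_κ ≠ ∅. If (Ū, V̄) ∈ ℝ^{m×κ} × ℝ^{n×κ} is a global minimizer of (U,V) ↦ ν f(UVᵀ) + (1/2)(‖U‖_{2,0} + ‖V‖_{2,0}), then ŪV̄ᵀ is a global minimizer of X ↦ ν f(X) + rank(X), i.e. ŪV̄ᵀ ∈ 𝒳*. -/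
open scoped BigOperators

noncomputable section

namespace Paper

open Matrix

/-- Euclidean dot product on `ℝ^p`. -/
def vdot {p : ℕ} (y z : Fin p → ℝ) : ℝ := ∑ i, y i * z i

/-- Euclidean norm on `ℝ^p`. -/
def vnorm {p : ℕ} (y : Fin p → ℝ) : ℝ := Real.sqrt (∑ i, (y i) ^ 2)

/-- Trace (Frobenius) inner product of matrices. -/
def finner {m n : ℕ} (X Y : Matrix (Fin m) (Fin n) ℝ) : ℝ := ∑ i, ∑ j, X i j * Y i j

/-- Frobenius norm of a matrix. -/
def fnorm {m n : ℕ} (X : Matrix (Fin m) (Fin n) ℝ) : ℝ := Real.sqrt (∑ i, ∑ j, (X i j) ^ 2)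

/-- Euclidean norm of the `j`-th column of a matrix. -/
def colNorm {m k : ℕ} (U : Matrix (Fin m) (Fin k) ℝ) (j : Fin k) : ℝ :=
  Real.sqrt (∑ i, (U i j) ^ 2)

/-- The `ℓ_{2,0}` norm of a matrix: the number of nonzero columns. -/
def l20 {m k : ℕ} (U : Matrix (Fin m) (Fin k) ℝ) : ℕ :=
  Set.ncard {j : Fin k | (fun i => U i j) ≠ 0}

/-- Number of nonzero entries of a vector. -/
def zeroNorm {k : ℕ} (z : Fin k → ℝ) : ℕ := Set.ncard {i : Fin k | z i ≠ 0}

/-- `k`-restricted smallest eigenvalue of `A*A`. -/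
def lamMin {m n p : ℕ} (A : Matrix (Fin m) (Fin n) ℝ →ₗ[ℝ] (Fin p → ℝ)) (k : ℕ) : ℝ :=
  sInf {t : ℝ | ∃ X : Matrix (Fin m) (Fin n) ℝ, X.rank ≤ k ∧ fnorm X = 1 ∧ t = (vnorm (A X)) ^ 2}

/-- `k`-restricted largest eigenvalue of `A*A`. -/
def lamMax {m n p : ℕ} (A : Matrix (Fin m) (Fin n) ℝ →ₗ[ℝ] (Fin p → ℝ)) (k : ℕ) : ℝ :=
  sSup {t : ℝ | ∃ X : Matrix (Fin m) (Fin n) ℝ, X.rank ≤ k ∧ fnorm X = 1 ∧ t = (vnorm (A X)) ^ 2}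

/-- Operator (spectral) norm of the sampling operator. -/
def opNorm {m n p : ℕ} (A : Matrix (Fin m) (Fin n) ℝ →ₗ[ℝ] (Fin p → ℝ)) : ℝ :=
  sSup {t : ℝ | ∃ X : Matrix (Fin m) (Fin n) ℝ, fnorm X = 1 ∧ t = vnorm (A X)}

/-- Spectral norm of a matrix. -/
def specNorm {a b : ℕ} (U : Matrix (Fin a) (Fin b) ℝ) : ℝ :=
  sSup {t : ℝ | ∃ x : Fin b → ℝ, vnorm x = 1 ∧ t = vnorm (U.mulVec x)}

/-- Adjoint of `A` w.r.t. the trace inner product, applied to `y`. -/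
def adjApply {m n p : ℕ} (A : Matrix (Fin m) (Fin n) ℝ →ₗ[ℝ] (Fin p → ℝ))
    (y : Fin p → ℝ) : Matrix (Fin m) (Fin n) ℝ :=
  fun i j => vdot (A (Matrix.single i j 1)) y

/-- `A*A` applied to a matrix. -/
def AstarA {m n p : ℕ} (A : Matrix (Fin m) (Fin n) ℝ →ₗ[ℝ] (Fin p → ℝ))
    (X : Matrix (Fin m) (Fin n) ℝ) : Matrix (Fin m) (Fin n) ℝ :=
  adjApply A (A X)

/-- Singular values of `X` arranged nonincreasingly, `sigmaFin X 0` the largest. -/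
def sigmaFin {m n : ℕ} (X : Matrix (Fin m) (Fin n) ℝ) : Fin m → ℝ := fun j =>
  Real.sqrt ((Matrix.isHermitian_mul_conjTranspose_self X).eigenvalues
    ((Tuple.sort (Matrix.isHermitian_mul_conjTranspose_self X).eigenvalues) j.rev))

/-- The `i`-th largest singular value (1-indexed); `0` for out-of-range indices. -/
def singularValue {m n : ℕ} (i : ℕ) (X : Matrix (Fin m) (Fin n) ℝ) : ℝ :=
  if h : 1 ≤ i ∧ i ≤ m then sigmaFin X ⟨i - 1, by omega⟩ else 0

/-- The family `𝓛` of proper lsc convex functions `φ : ℝ → (−∞,∞]` with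
`[0,1] ⊆ int(dom φ)`, `φ(1) = 1` and `min_{t ∈ [0,1]} φ(t) = 0` attained at `t*`. -/
structure LFamily where
  phi : ℝ → EReal
  lsc : LowerSemicontinuous phi
  convex : ∀ x y a b : ℝ, 0 ≤ a → 0 ≤ b → a + b = 1 →
    phi (a * x + b * y) ≤ (a : EReal) * phi x + (b : EReal) * phi y
  ne_bot : ∀ x, phi x ≠ ⊥
  icc_subset_interior_dom : Set.Icc (0 : ℝ) 1 ⊆ interior {t : ℝ | phi t ≠ ⊤}
  phi_one : phi 1 = 1
  tstar : ℝ
  tstar_mem : tstar ∈ Set.Icc (0 : ℝ) 1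
  phi_tstar : phi tstar = 0
  phi_nonneg : ∀ t ∈ Set.Icc (0 : ℝ) 1, 0 ≤ phi t

/-- Left derivative of `φ` at `1`, as the supremum of difference quotients. -/
def leftDerivOne (L : LFamily) : ℝ :=
  sSup {q : ℝ | ∃ t : ℝ, 0 ≤ t ∧ t < 1 ∧ q = (1 - (L.phi t).toReal) / (1 - t)}

/-- The function `ψ`: equal to `φ` on `[0,1]` and `+∞` elsewhere. -/
def psi (L : LFamily) (t : ℝ) : EReal := if t ∈ Set.Icc (0 : ℝ) 1 then L.phi t else ⊤

/-- The conjugate `ψ*` of `ψ`. -/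
def psiStar (L : LFamily) (s : ℝ) : EReal := ⨆ t : ℝ, ((s * t : ℝ) : EReal) - psi L t

/-! The rank of `U * Vᵀ` is bounded by the number of nonzero columns of either factor, hence by
half their sum; conversely, a rank factorization of a rank-regularized minimizer `X₀` of rank
`≤ κ`, padded with zero columns, gives a pair `(U₀, V₀)` with `U₀ * V₀ᵀ = X₀` whose factored
objective is at most that of `X₀`. Chaining these with the minimality of `(Ū, V̄)` and of `X₀`
proves the claim. -/

theorem rank_le_l20 {m k : ℕ} (U : Matrix (Fin m) (Fin k) ℝ) : U.rank ≤ l20 U := by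
  classical
  have hsupp : Function.support Uᵀ.row = {j | (fun i => U i j) ≠ 0} := rfl
  rw [← rank_transpose, l20, ← hsupp, Set.ncard_eq_toFinset_card']
  exact rank_le_card_of_support_subset _ _ (Set.coe_toFinset _).symm.subset

theorem rank_mul_transpose_le_half_l20 {m n k : ℕ} (U : Matrix (Fin m) (Fin k) ℝ)
    (V : Matrix (Fin n) (Fin k) ℝ) :
    ((U * Vᵀ).rank : ℝ) ≤ (1 / 2) * ((l20 U : ℝ) + (l20 V : ℝ)) := by
  have hU : (U * Vᵀ).rank ≤ l20 U := (rank_mul_le_left U Vᵀ).trans (rank_le_l20 U)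
  have hV : (U * Vᵀ).rank ≤ l20 V :=
    (rank_mul_le_right U Vᵀ).trans ((rank_transpose V).trans_le (rank_le_l20 V))
  have hU' : ((U * Vᵀ).rank : ℝ) ≤ l20 U := by exact_mod_cast hU
  have hV' : ((U * Vᵀ).rank : ℝ) ≤ l20 V := by exact_mod_cast hV
  linarith

theorem l20_mul_le_right {m k l : ℕ} (A : Matrix (Fin m) (Fin k) ℝ)
    (P : Matrix (Fin k) (Fin l) ℝ) : l20 (A * P) ≤ l20 P := by
  refine Set.ncard_le_ncard (fun j hj hPj => hj ?_) (Set.toFinite _)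
  funext i
  simp [mul_apply, fun k => congrFun hPj k]

theorem exists_rank_factorization {ι κ K : Type*} [Fintype ι] [Fintype κ] [Field K]
    (X : Matrix ι κ K) :
    ∃ (B : Matrix ι (Fin X.rank) K) (C : Matrix (Fin X.rank) κ K), B * C = X := by
  let b : Module.Basis (Fin X.rank) K (Submodule.span K (Set.range X.col)) :=
    (Module.finBasis K _).reindex (finCongr (rank_eq_finrank_span_cols X).symm)
  let c : κ → Submodule.span K (Set.range X.col) := fun j =>
    ⟨X.col j, Submodule.subset_span ⟨j, rfl⟩⟩
  refine ⟨of fun i k => (b k : ι → K) i, of fun k j => b.repr (c j) k, ?_⟩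
  ext i j
  have hcol : ∑ k, b.repr (c j) k * (b k : ι → K) i = X i j := by
    have h := congrFun (congrArg Subtype.val (b.sum_repr (c j))) i
    simp only [Submodule.coe_sum, Finset.sum_apply, Submodule.coe_smul, Pi.smul_apply,
      smul_eq_mul] at h
    exact h
  simpa [mul_apply, mul_comm] using hcol

theorem exists_mul_transpose_eq_l20_le_rank {m n κ : ℕ} (X : Matrix (Fin m) (Fin n) ℝ)
    (hX : X.rank ≤ κ) :
    ∃ (U : Matrix (Fin m) (Fin κ) ℝ) (V : Matrix (Fin n) (Fin κ) ℝ),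
      U * Vᵀ = X ∧ l20 U ≤ X.rank ∧ l20 V ≤ X.rank := by
  obtain ⟨B, C, hBC⟩ := exists_rank_factorization X
  let P : Matrix (Fin X.rank) (Fin κ) ℝ :=
    (1 : Matrix (Fin κ) (Fin κ) ℝ).submatrix (Fin.castLE hX) id
  have hPP : P * Pᵀ = 1 := by
    ext i j
    simp [P, mul_apply, one_apply]
  have hP : l20 P ≤ X.rank := by
    have hsupp : {j | (fun i => P i j) ≠ 0} ⊆ Set.range (Fin.castLE hX) := by
      intro j hj
      by_contra hjP
      exact hj (funext fun i => one_apply_ne fun h => hjP ⟨i, h⟩)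
    calc l20 P ≤ (Set.range (Fin.castLE hX)).ncard := Set.ncard_le_ncard hsupp (Set.toFinite _)
      _ = X.rank := by rw [Set.ncard_range_of_injective (Fin.castLE_injective hX), Nat.card_fin]
  refine ⟨B * P, Cᵀ * P, ?_, (l20_mul_le_right B P).trans hP, (l20_mul_le_right Cᵀ P).trans hP⟩
  rw [transpose_mul, transpose_transpose, Matrix.mul_assoc, ← Matrix.mul_assoc P, hPP,
    Matrix.one_mul, hBC]

theorem rank_reg_min_of_factored_global_min_general
    {m n : ℕ} (f : Matrix (Fin m) (Fin n) ℝ → ℝ) (ν : ℝ)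
    (κ : ℕ)
    (hne : ∃ X0 : Matrix (Fin m) (Fin n) ℝ,
      (∀ X : Matrix (Fin m) (Fin n) ℝ,
        ν * f X0 + (X0.rank : ℝ) ≤ ν * f X + (X.rank : ℝ)) ∧ X0.rank ≤ κ)
    (Ubar : Matrix (Fin m) (Fin κ) ℝ) (Vbar : Matrix (Fin n) (Fin κ) ℝ)
    (hmin : ∀ (U : Matrix (Fin m) (Fin κ) ℝ) (V : Matrix (Fin n) (Fin κ) ℝ),
      ν * f (Ubar * Vbarᵀ) + (1 / 2) * ((l20 Ubar : ℝ) + (l20 Vbar : ℝ)) ≤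
        ν * f (U * Vᵀ) + (1 / 2) * ((l20 U : ℝ) + (l20 V : ℝ))) :
    ∀ X : Matrix (Fin m) (Fin n) ℝ,
      ν * f (Ubar * Vbarᵀ) + ((Ubar * Vbarᵀ).rank : ℝ) ≤ ν * f X + (X.rank : ℝ) := by
  intro X
  obtain ⟨X0, hX0, hX0κ⟩ := hne
  obtain ⟨U0, V0, hUV0, hU0, hV0⟩ := exists_mul_transpose_eq_l20_le_rank X0 hX0κ
  have hbar := rank_mul_transpose_le_half_l20 Ubar Vbar
  have h0 := hmin U0 V0
  rw [hUV0] at h0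
  have hU0' : (l20 U0 : ℝ) ≤ X0.rank := by exact_mod_cast hU0
  have hV0' : (l20 V0 : ℝ) ≤ X0.rank := by exact_mod_cast hV0
  linarith [hX0 X]

/-- a global minimizer of the `ℓ_{2,0}` regularized factorization yields a
global minimizer of the rank regularized problem (second part of Lemma 3.1). -/
theorem rank_reg_min_of_factored_global_min
    {m n : ℕ} (f : Matrix (Fin m) (Fin n) ℝ → ℝ) (ν : ℝ) (hν : 0 < ν)
    (κ : ℕ) (hκ : 1 ≤ κ)
    (hne : ∃ X0 : Matrix (Fin m) (Fin n) ℝ,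
      (∀ X : Matrix (Fin m) (Fin n) ℝ,
        ν * f X0 + (X0.rank : ℝ) ≤ ν * f X + (X.rank : ℝ)) ∧ X0.rank ≤ κ)
    (Ubar : Matrix (Fin m) (Fin κ) ℝ) (Vbar : Matrix (Fin n) (Fin κ) ℝ)
    (hmin : ∀ (U : Matrix (Fin m) (Fin κ) ℝ) (V : Matrix (Fin n) (Fin κ) ℝ),
      ν * f (Ubar * Vbarᵀ) + (1 / 2) * ((l20 Ubar : ℝ) + (l20 Vbar : ℝ)) ≤
        ν * f (U * Vᵀ) + (1 / 2) * ((l20 U : ℝ) + (l20 V : ℝ))) :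
    ∀ X : Matrix (Fin m) (Fin n) ℝ,
      ν * f (Ubar * Vbarᵀ) + ((Ubar * Vbarᵀ).rank : ℝ) ≤ ν * f X + (X.rank : ℝ) :=
  rank_reg_min_of_factored_global_min_general f ν κ hne Ubar Vbar hmin

end Paper
end
end

section
/- Let Ū ∈ ℝ^{m×κ} and V̄ ∈ ℝ^{n×κ} satisfy ŪᵀŪ = V̄ᵀV̄, let r = rank(ŪV̄ᵀ) ≥ 1, and suppose ‖Ū‖_{2,0} = ‖V̄‖_{2,0} = r. Then: (a) ‖Ū_j‖ = ‖V̄_j‖ for every column index j, so the sets of nonzero columns of Ū and V̄ coincide; and (b) for every j with Ū_j ≠ 0, ‖Ū_j‖ ≥ √(σ_r(ŪV̄ᵀ)), where σ_r denotes the r-th largest singular value. -/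
open scoped BigOperators

noncomputable section

open Finset Matrix

theorem Tuple.sort_rev_le_of_card_le {α : Type*} [LinearOrder α] {m : ℕ} (f : Fin m → α)
    (a : α) (k : Fin m) (hcard : #{i | a < f i} ≤ k + 1) {i : Fin m} (hi : a < f i) :
    f (Tuple.sort f k.rev) ≤ f i := by
  have hmono (p q : Fin m) (hpq : p ≤ q) : f (Tuple.sort f p) ≤ f (Tuple.sort f q) :=
    Tuple.monotone_sort f hpq
  suffices k.rev ≤ (Tuple.sort f).symm i by
    simpa using hmono _ _ this
  by_contra! hlt
  have hsub : #(Ici ((Tuple.sort f).symm i)) ≤ #{i | a < f i} := by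
    refine card_le_card_of_injOn (Tuple.sort f) (fun q hq => ?_) (Tuple.sort f).injective.injOn
    have := hmono _ _ (mem_Ici.mp hq)
    rw [Equiv.apply_symm_apply] at this
    simpa using hi.trans_le this
  rw [Fin.card_Ici] at hsub
  have := Fin.lt_def.mp hlt
  rw [Fin.val_rev] at this
  omega

theorem Matrix.IsHermitian.posSemidef_mul_self_sub_smul {n : Type*} [Fintype n] [DecidableEq n]
    {M : Matrix n n ℝ} (hM : M.IsHermitian) {c : ℝ}
    (h : ∀ i, c * hM.eigenvalues i ≤ hM.eigenvalues i * hM.eigenvalues i) :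
    (M * M - c • M).PosSemidef := by
  set μ := hM.eigenvalues
  set U : Matrix n n ℝ := (hM.eigenvectorUnitary : Matrix n n ℝ)
  have hU : star U * U = 1 := Unitary.coe_star_mul_self _
  have hM' : M = U * diagonal μ * star U := by
    conv_lhs => rw [hM.spectral_theorem, Unitary.conjStarAlgAut_apply]
    rfl
  have hD : diagonal (fun i => μ i * μ i - c * μ i) = diagonal μ * diagonal μ - c • diagonal μ := by
    rw [diagonal_mul_diagonal, ← diagonal_smul, ← diagonal_sub]
    rfl
  have hconj : M * M - c • M = U * diagonal (fun i => μ i * μ i - c * μ i) * star U := by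
    rw [hD, hM']
    simp only [mul_sub, sub_mul, Matrix.mul_smul, Matrix.smul_mul, mul_assoc,
      ← mul_assoc (star U) U, hU, one_mul]
  rw [hconj]
  exact (PosSemidef.diagonal fun i => sub_nonneg.mpr (h i)).mul_mul_conjTranspose_same U

theorem Matrix.exists_mem_range_transpose_ne_zero_mulVec_eq_zero {K m n ι : Type*} [Field K]
    [Fintype m] [Fintype n] (X : Matrix m n K) (W : Matrix ι n K) (S : Finset ι)
    (hS : #S < X.rank) :
    ∃ w ∈ LinearMap.range Xᵀ.mulVecLin, w ≠ 0 ∧ ∀ k ∈ S, (W *ᵥ w) k = 0 := by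
  set P := LinearMap.range Xᵀ.mulVecLin
  let f : P →ₗ[K] (S → K) :=
    LinearMap.funLeft K K Subtype.val ∘ₗ W.mulVecLin ∘ₗ P.subtype
  have hP : Module.finrank K P = X.rank := by
    rw [← rank_transpose]
    rfl
  have hker : LinearMap.ker f ≠ ⊥ :=
    LinearMap.ker_ne_bot_of_finrank_lt (by simpa [hP] using hS)
  obtain ⟨w, hw, hw0⟩ := (Submodule.ne_bot_iff _).mp hker
  refine ⟨w, w.2, by simpa using hw0, fun k hk => ?_⟩
  simpa [f] using congrFun (LinearMap.mem_ker.mp hw) ⟨k, hk⟩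

theorem Matrix.mul_transpose_mulVec_eq_smul {R m n κ : Type*} [CommRing R] [Fintype κ]
    [Fintype n] {U : Matrix m κ R} {V : Matrix n κ R} {w : n → R} {j : κ}
    (h : ∀ k ≠ j, Uᵀ k ≠ 0 → (Vᵀ *ᵥ w) k = 0) :
    (U * Vᵀ) *ᵥ w = (Vᵀ *ᵥ w) j • Uᵀ j := by
  rw [← mulVec_mulVec, mulVec_eq_sum, sum_eq_single j]
  · exact op_smul_eq_smul _ _
  · intro k _ hkj
    by_cases hk : Uᵀ k = 0
    · simp [hk]
    · simp [h k hkj hk]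
  · simp

theorem dotProduct_mul_dotProduct_self_le {n : Type*} [Fintype n] (v w : n → ℝ) :
    (v ⬝ᵥ w) * (v ⬝ᵥ w) ≤ (v ⬝ᵥ v) * (w ⬝ᵥ w) := by
  simpa [dotProduct, sq] using sum_mul_sq_le_sq_mul_sq univ v w

namespace Paper

theorem sq_singularValue_rank_mul_le {m n : ℕ} (X : Matrix (Fin m) (Fin n) ℝ) (i : Fin m) :
    singularValue X.rank X ^ 2 * (isHermitian_mul_conjTranspose_self X).eigenvalues i ≤
      (isHermitian_mul_conjTranspose_self X).eigenvalues i *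
        (isHermitian_mul_conjTranspose_self X).eigenvalues i := by
  set hM : (X * Xᴴ).IsHermitian := isHermitian_mul_conjTranspose_self X
  set μ := hM.eigenvalues
  have hμ_nonneg : ∀ i, 0 ≤ μ i := (posSemidef_self_mul_conjTranspose X).eigenvalues_nonneg
  rcases Nat.eq_zero_or_pos X.rank with hr | hr
  · rw [singularValue, dif_neg (by omega), sq, zero_mul, zero_mul]
    exact mul_self_nonneg _
  rcases (hμ_nonneg i).eq_or_lt with hi | hi
  · simp [← hi]
  refine mul_le_mul_of_nonneg_right ?_ hi.le
  have hrm : X.rank ≤ m := X.rank_le_height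
  set k : Fin m := ⟨X.rank - 1, by omega⟩
  have hcard : #{i | 0 < μ i} ≤ k + 1 := by
    have hpos : ∀ i, 0 < μ i ↔ μ i ≠ 0 := fun i => (hμ_nonneg i).lt_iff_ne'
    rw [show (k : ℕ) + 1 = X.rank by simp [k]; omega, ← rank_self_mul_conjTranspose,
      hM.rank_eq_card_non_zero_eigs, Fintype.card_subtype]
    simp only [hpos, μ, le_rfl]
  rw [singularValue, dif_pos ⟨hr, hrm⟩, sigmaFin, Real.sq_sqrt (hμ_nonneg _)]
  exact Tuple.sort_rev_le_of_card_le μ 0 k hcard hi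

theorem sq_singularValue_rank_mul_dotProduct_le {m n : ℕ} (X : Matrix (Fin m) (Fin n) ℝ)
    {w : Fin n → ℝ} (hw : w ∈ LinearMap.range Xᵀ.mulVecLin) :
    singularValue X.rank X ^ 2 * (w ⬝ᵥ w) ≤ (X *ᵥ w) ⬝ᵥ (X *ᵥ w) := by
  obtain ⟨z, rfl⟩ := hw
  have hquad := ((isHermitian_mul_conjTranspose_self X).posSemidef_mul_self_sub_smul
    (sq_singularValue_rank_mul_le X)).dotProduct_mulVec_nonneg z
  have hz : z ⬝ᵥ (X * Xᵀ) *ᵥ z = (Xᵀ *ᵥ z) ⬝ᵥ (Xᵀ *ᵥ z) := by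
    rw [← mulVec_mulVec, dotProduct_mulVec, ← mulVec_transpose]
  have hz' : z ⬝ᵥ (X * Xᵀ * (X * Xᵀ)) *ᵥ z = (X *ᵥ Xᵀ *ᵥ z) ⬝ᵥ (X *ᵥ Xᵀ *ᵥ z) := by
    rw [← mulVec_mulVec, dotProduct_mulVec, ← mulVec_transpose, transpose_mul, transpose_transpose,
      ← mulVec_mulVec]
  rw [conjTranspose_eq_transpose_of_trivial, star_trivial, sub_mulVec, dotProduct_sub,
    smul_mulVec, dotProduct_smul, smul_eq_mul, sub_nonneg, hz, hz'] at hquad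
  exact hquad

theorem colNorm_sq {m k : ℕ} (U : Matrix (Fin m) (Fin k) ℝ) (j : Fin k) :
    colNorm U j ^ 2 = Uᵀ j ⬝ᵥ Uᵀ j := by
  rw [colNorm, Real.sq_sqrt (by positivity)]
  simp [dotProduct, sq]

theorem colNorm_nonneg {m k : ℕ} (U : Matrix (Fin m) (Fin k) ℝ) (j : Fin k) :
    0 ≤ colNorm U j :=
  Real.sqrt_nonneg _

theorem colNorm_eq_zero_iff {m k : ℕ} {U : Matrix (Fin m) (Fin k) ℝ} {j : Fin k} :
    colNorm U j = 0 ↔ (fun i => U i j) = 0 := by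
  rw [← sq_eq_zero_iff, colNorm_sq, dotProduct_self_eq_zero]
  rfl

theorem colNorm_eq_of_transpose_mul_self_eq {m n k : ℕ} {U : Matrix (Fin m) (Fin k) ℝ}
    {V : Matrix (Fin n) (Fin k) ℝ} (h : Uᵀ * U = Vᵀ * V) (j : Fin k) :
    colNorm U j = colNorm V j := by
  rw [← sq_eq_sq₀ (colNorm_nonneg U j) (colNorm_nonneg V j), colNorm_sq, colNorm_sq]
  exact congrFun₂ h j j

theorem l20_eq_card {m k : ℕ} (U : Matrix (Fin m) (Fin k) ℝ) :
    l20 U = #{j | (fun i => U i j) ≠ 0} := by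
  rw [l20, ← Set.ncard_coe_finset]
  congr 1
  ext j
  simp

theorem singularValue_rank_le_colNorm_mul_colNorm {m n κ : ℕ}
    (U : Matrix (Fin m) (Fin κ) ℝ) (V : Matrix (Fin n) (Fin κ) ℝ)
    (hU : l20 U ≤ (U * Vᵀ).rank) {j : Fin κ} (hj : (fun i => U i j) ≠ 0) :
    singularValue (U * Vᵀ).rank (U * Vᵀ) ≤ colNorm U j * colNorm V j := by
  rw [l20_eq_card] at hU
  set S : Finset (Fin κ) := {k | (fun i => U i k) ≠ 0}
  have hjS : j ∈ S := mem_filter.mpr ⟨mem_univ j, hj⟩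
  have hS : #(S.erase j) < (U * Vᵀ).rank := by
    rw [card_erase_of_mem hjS]
    have := card_pos.mpr ⟨j, hjS⟩
    omega
  obtain ⟨w, hw, hw0, horth⟩ :=
    exists_mem_range_transpose_ne_zero_mulVec_eq_zero (U * Vᵀ) Vᵀ (S.erase j) hS
  have hXw : (U * Vᵀ) *ᵥ w = (Vᵀ *ᵥ w) j • Uᵀ j :=
    mul_transpose_mulVec_eq_smul fun k hkj hk =>
      horth k (mem_erase.mpr ⟨hkj, mem_filter.mpr ⟨mem_univ k, hk⟩⟩)
  have hσ := sq_singularValue_rank_mul_dotProduct_le (U * Vᵀ) hw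
  have hy : (Vᵀ *ᵥ w) j = Vᵀ j ⬝ᵥ w := rfl
  rw [hXw, smul_dotProduct, dotProduct_smul, smul_eq_mul, smul_eq_mul, hy] at hσ
  have hw_pos : 0 < w ⬝ᵥ w := by simpa using dotProduct_self_star_pos_iff.mpr hw0
  have hUj : 0 ≤ Uᵀ j ⬝ᵥ Uᵀ j := by
    rw [← colNorm_sq]
    positivity
  refine le_of_pow_le_pow_left₀ two_ne_zero
    (mul_nonneg (colNorm_nonneg U j) (colNorm_nonneg V j)) (le_of_mul_le_mul_right ?_ hw_pos)
  calc _ ≤ _ := hσ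
    _ = (Uᵀ j ⬝ᵥ Uᵀ j) * ((Vᵀ j ⬝ᵥ w) * (Vᵀ j ⬝ᵥ w)) := by ring
    _ ≤ (Uᵀ j ⬝ᵥ Uᵀ j) * ((Vᵀ j ⬝ᵥ Vᵀ j) * (w ⬝ᵥ w)) :=
      mul_le_mul_of_nonneg_left (dotProduct_mul_dotProduct_self_le (Vᵀ j) w) hUj
    _ = (colNorm U j * colNorm V j) ^ 2 * (w ⬝ᵥ w) := by
      rw [mul_pow, colNorm_sq, colNorm_sq]
      ring

theorem balanced_factor_column_norms_general
    {m n κ : ℕ} (Ubar : Matrix (Fin m) (Fin κ) ℝ) (Vbar : Matrix (Fin n) (Fin κ) ℝ)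
    (hbal : Ubarᵀ * Ubar = Vbarᵀ * Vbar)
    (r : ℕ) (hr : (Ubar * Vbarᵀ).rank = r)
    (hU : l20 Ubar = r) :
    (∀ j : Fin κ, colNorm Ubar j = colNorm Vbar j) ∧
    ({j : Fin κ | (fun i => Ubar i j) ≠ 0} = {j : Fin κ | (fun i => Vbar i j) ≠ 0}) ∧
    (∀ j : Fin κ, (fun i => Ubar i j) ≠ 0 →
      Real.sqrt (singularValue r (Ubar * Vbarᵀ)) ≤ colNorm Ubar j) := by
  have hcol := colNorm_eq_of_transpose_mul_self_eq hbal
  refine ⟨hcol, ?_, fun j hj => ?_⟩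
  · ext j
    exact not_congr (by rw [← colNorm_eq_zero_iff, ← colNorm_eq_zero_iff, hcol j])
  · subst hr
    calc √(singularValue (Ubar * Vbarᵀ).rank (Ubar * Vbarᵀ))
        ≤ √(colNorm Ubar j * colNorm Ubar j) := by
          gcongr
          simpa only [hcol j] using
            singularValue_rank_le_colNorm_mul_colNorm Ubar Vbar hU.le hj
      _ = colNorm Ubar j := Real.sqrt_mul_self (colNorm_nonneg Ubar j)

/-- columns of balanced factors have equal norms, and nonzero columns
have norm at least `√σ_r`. -/
theorem balanced_factor_column_norms
    {m n κ : ℕ} (Ubar : Matrix (Fin m) (Fin κ) ℝ) (Vbar : Matrix (Fin n) (Fin κ) ℝ)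
    (hbal : Ubarᵀ * Ubar = Vbarᵀ * Vbar)
    (r : ℕ) (hr : (Ubar * Vbarᵀ).rank = r) (hr1 : 1 ≤ r)
    (hU : l20 Ubar = r) (hV : l20 Vbar = r) :
    (∀ j : Fin κ, colNorm Ubar j = colNorm Vbar j) ∧
    ({j : Fin κ | (fun i => Ubar i j) ≠ 0} = {j : Fin κ | (fun i => Vbar i j) ≠ 0}) ∧
    (∀ j : Fin κ, (fun i => Ubar i j) ≠ 0 →
      Real.sqrt (singularValue r (Ubar * Vbarᵀ)) ≤ colNorm Ubar j) :=
  balanced_factor_column_norms_general Ubar Vbar hbal r hr hU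

end Paper
end
end
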